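/- Let α > 1/2. Then there exist constants c, C > 0 such that for all s ∈ ℝ: c · cosh(πs)² (1+|s|)^{-2α} ≤ ∫_{-π}^{π} (π - |θ|)^{2α - 1} e^{2θ s} dθ ≤ C · cosh(πs)² (1+|s|)^{-2α}. -/

import Mathlib

/-!
Substituting `u = π - |θ|` on each half of `[-π, π]` writes the integral as
`e^{2πs} J(2s) + e^{-2πs} J(-2s)`, where `J(t) = ∫₀^π u^{κ-1} e^{-tu} du` (`κ = 2α`) is a truncated
Laplace transform. For `t ≥ 0` one has `J(t) ≍ (1 + t)^{-κ}`: from below by keeping only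
`[0, 1/(1+t)]`, where `e^{-tu} ≥ e^{-1}`; from above by `J(t) ≤ e^π J(t+1) ≤ e^π Γ(κ) (1+t)^{-κ}`.
The second term is bounded by `π^κ/κ`, which `e^{2πs} (1+s)^{-κ}` dominates. Finally
`cosh(πs)² ≍ e^{2π|s|}` and the integral is even in `s`.
-/

open MeasureTheory Set Real

noncomputable def truncLaplace (κ t : ℝ) : ℝ :=
  ∫ u in (0:ℝ)..π, u ^ (κ - 1) * exp (-(t * u))

noncomputable def weightIntegral (κ s : ℝ) : ℝ :=
  ∫ θ in (-π)..π, (π - |θ|) ^ (κ - 1) * exp (2 * θ * s)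

section truncLaplace

variable {κ : ℝ}

lemma intervalIntegrable_rpow_mul_exp (hκ : 0 < κ) (t a b : ℝ) :
    IntervalIntegrable (fun u : ℝ => u ^ (κ - 1) * exp (-(t * u))) volume a b :=
  (intervalIntegral.intervalIntegrable_rpow' (by linarith)).mul_continuousOn (by fun_prop)

lemma truncLaplace_nonneg (t : ℝ) : 0 ≤ truncLaplace κ t :=
  intervalIntegral.integral_nonneg pi_pos.le fun _ hu =>
    mul_nonneg (rpow_nonneg hu.1 _) (exp_pos _).le

lemma truncLaplace_le_exp_mul (hκ : 0 < κ) {c : ℝ} (hc : 0 ≤ c) (t : ℝ) :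
    truncLaplace κ t ≤ exp (c * π) * truncLaplace κ (t + c) := by
  rw [truncLaplace, truncLaplace, ← intervalIntegral.integral_const_mul]
  refine intervalIntegral.integral_mono_on pi_pos.le (intervalIntegrable_rpow_mul_exp hκ _ _ _)
    ((intervalIntegrable_rpow_mul_exp hκ _ _ _).const_mul _) fun u hu => ?_
  have hexp : exp (-(t * u)) = exp (c * u) * exp (-((t + c) * u)) := by
    rw [← exp_add]; ring_nf
  rw [hexp, mul_left_comm]
  gcongr
  · exact mul_nonneg (rpow_nonneg hu.1 _) (exp_pos _).le
  · exact hu.2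

lemma truncLaplace_le_Gamma (hκ : 0 < κ) {t : ℝ} (ht : 0 < t) :
    truncLaplace κ t ≤ Gamma κ * t ^ (-κ) := by
  have hint : IntegrableOn (fun u : ℝ => u ^ (κ - 1) * exp (-(t * u))) (Ioi 0) := by
    simpa [rpow_one, neg_mul] using
      integrableOn_rpow_mul_exp_neg_mul_rpow (p := 1) (by linarith) one_pos ht
  calc truncLaplace κ t = ∫ u in Ioc 0 π, u ^ (κ - 1) * exp (-(t * u)) :=
        intervalIntegral.integral_of_le pi_pos.le
    _ ≤ ∫ u in Ioi 0, u ^ (κ - 1) * exp (-(t * u)) := by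
        refine setIntegral_mono_set hint ?_ Ioc_subset_Ioi_self.eventuallyLE
        filter_upwards [ae_restrict_mem measurableSet_Ioi] with u hu
        exact mul_nonneg (rpow_nonneg (le_of_lt hu) _) (exp_pos _).le
    _ = Gamma κ * t ^ (-κ) := by
        rw [integral_rpow_mul_exp_neg_mul_Ioi hκ ht, one_div, inv_rpow ht.le, rpow_neg ht.le,
          mul_comm]

lemma truncLaplace_le_one_add_rpow (hκ : 0 < κ) {t : ℝ} (ht : 0 ≤ t) :
    truncLaplace κ t ≤ exp π * Gamma κ * (1 + t) ^ (-κ) := by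
  calc truncLaplace κ t ≤ exp (1 * π) * truncLaplace κ (t + 1) :=
        truncLaplace_le_exp_mul hκ zero_le_one t
    _ ≤ exp π * (Gamma κ * (1 + t) ^ (-κ)) := by
        rw [one_mul, add_comm]
        gcongr
        exact truncLaplace_le_Gamma hκ (by linarith)
    _ = exp π * Gamma κ * (1 + t) ^ (-κ) := by ring

lemma exp_neg_one_div_mul_le_truncLaplace (hκ : 0 < κ) {t : ℝ} (ht : 0 ≤ t) :
    exp (-1) / κ * (1 + t) ^ (-κ) ≤ truncLaplace κ t := by
  set b := (1 + t)⁻¹ with hb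
  have hb0 : 0 < b := by positivity
  have hbπ : b ≤ π := (inv_le_one_of_one_le₀ (by linarith)).trans (by linarith [pi_gt_three])
  have htb : t * b ≤ 1 := by
    rw [hb, mul_inv_le_iff₀ (by linarith)]
    linarith
  calc exp (-1) / κ * (1 + t) ^ (-κ) = ∫ u in (0:ℝ)..b, exp (-1) * u ^ (κ - 1) := by
        rw [intervalIntegral.integral_const_mul, integral_rpow (Or.inl (by linarith)),
          sub_add_cancel, zero_rpow hκ.ne', hb, inv_rpow (by linarith), ← rpow_neg (by linarith)]
        ring
    _ ≤ ∫ u in (0:ℝ)..b, u ^ (κ - 1) * exp (-(t * u)) := by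
        refine intervalIntegral.integral_mono_on hb0.le ?_
          (intervalIntegrable_rpow_mul_exp hκ _ _ _) fun u hu => ?_
        · exact (intervalIntegral.intervalIntegrable_rpow' (by linarith)).const_mul _
        rw [mul_comm]
        gcongr
        · exact rpow_nonneg hu.1 _
        · nlinarith [hu.2]
    _ ≤ truncLaplace κ t := by
        refine intervalIntegral.integral_mono_interval le_rfl hb0.le hbπ ?_
          (intervalIntegrable_rpow_mul_exp hκ _ _ _)
        filter_upwards [ae_restrict_mem measurableSet_Ioc] with u hu
        exact mul_nonneg (rpow_nonneg hu.1.le _) (exp_pos _).le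

lemma truncLaplace_neg_le (hκ : 0 < κ) {t : ℝ} (ht : 0 ≤ t) :
    truncLaplace κ (-t) ≤ π ^ κ / κ * exp (π * t) := by
  calc truncLaplace κ (-t) ≤ ∫ u in (0:ℝ)..π, u ^ (κ - 1) * exp (π * t) := by
        refine intervalIntegral.integral_mono_on pi_pos.le
          (intervalIntegrable_rpow_mul_exp hκ _ _ _)
          ((intervalIntegral.intervalIntegrable_rpow' (by linarith)).mul_const _) fun u hu => ?_
        gcongr
        · exact rpow_nonneg hu.1 _
        · nlinarith [hu.2]
    _ = π ^ κ / κ * exp (π * t) := by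
        rw [intervalIntegral.integral_mul_const, integral_rpow (Or.inl (by linarith)),
          sub_add_cancel, zero_rpow hκ.ne', sub_zero]

end truncLaplace

section weightIntegral

variable {κ : ℝ}

lemma weightIntegral_eq (hκ : 1 ≤ κ) (s : ℝ) :
    weightIntegral κ s = exp (2 * π * s) * truncLaplace κ (2 * s) +
      exp (-(2 * π * s)) * truncLaplace κ (-(2 * s)) := by
  set g := fun t u : ℝ => u ^ (κ - 1) * exp (-(t * u))
  have hcont : Continuous fun θ : ℝ => (π - |θ|) ^ (κ - 1) * exp (2 * θ * s) :=
    ((continuous_rpow_const (by linarith)).comp (by fun_prop)).mul (by fun_prop)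
  have hleft : ∫ θ in (-π)..0, (π - |θ|) ^ (κ - 1) * exp (2 * θ * s) =
      exp (-(2 * π * s)) * truncLaplace κ (-(2 * s)) := by
    have hθ : ∀ θ ∈ uIcc (-π) 0, (π - |θ|) ^ (κ - 1) * exp (2 * θ * s) =
        exp (-(2 * π * s)) * g (-(2 * s)) (θ + π) := fun θ hθ => by
      rw [uIcc_of_le (by linarith [pi_pos])] at hθ
      rw [abs_of_nonpos hθ.2, mul_left_comm, ← exp_add]
      ring_nf
    rw [intervalIntegral.integral_congr hθ, intervalIntegral.integral_const_mul,
      intervalIntegral.integral_comp_add_right (g (-(2 * s))), neg_add_cancel, zero_add,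
      truncLaplace]
  have hright : ∫ θ in (0:ℝ)..π, (π - |θ|) ^ (κ - 1) * exp (2 * θ * s) =
      exp (2 * π * s) * truncLaplace κ (2 * s) := by
    have hθ : ∀ θ ∈ uIcc 0 π, (π - |θ|) ^ (κ - 1) * exp (2 * θ * s) =
        exp (2 * π * s) * g (2 * s) (π - θ) := fun θ hθ => by
      rw [uIcc_of_le pi_pos.le] at hθ
      rw [abs_of_nonneg hθ.1, mul_left_comm, ← exp_add]
      ring_nf
    rw [intervalIntegral.integral_congr hθ, intervalIntegral.integral_const_mul,
      intervalIntegral.integral_comp_sub_left (g (2 * s)), sub_self, sub_zero, truncLaplace]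
  rw [weightIntegral, ← intervalIntegral.integral_add_adjacent_intervals
    (hcont.intervalIntegrable _ 0) (hcont.intervalIntegrable 0 _), hleft, hright, add_comm]

lemma weightIntegral_neg (κ s : ℝ) : weightIntegral κ (-s) = weightIntegral κ s := by
  have h := intervalIntegral.integral_comp_neg (a := -π) (b := π)
    fun θ => (π - |θ|) ^ (κ - 1) * exp (2 * θ * s)
  simp only [neg_neg, abs_neg] at h
  rw [weightIntegral, weightIntegral, ← h]
  congr 1 with θ
  ring_nf

lemma weightIntegral_abs (κ s : ℝ) : weightIntegral κ |s| = weightIntegral κ s := by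
  rcases abs_choice s with h | h <;> rw [h]
  exact weightIntegral_neg κ s

end weightIntegral

lemma cosh_sq_le_exp_two_mul {x : ℝ} (hx : 0 ≤ x) : cosh x ^ 2 ≤ exp (2 * x) := by
  have h : cosh x ≤ exp x := by
    rw [cosh_eq]
    linarith [exp_le_exp.mpr (neg_le_self hx)]
  calc cosh x ^ 2 ≤ exp x ^ 2 := pow_le_pow_left₀ (cosh_pos x).le h 2
    _ = exp (2 * x) := by rw [sq, ← exp_add, two_mul]

lemma exp_two_mul_le_four_mul_cosh_sq (x : ℝ) : exp (2 * x) ≤ 4 * cosh x ^ 2 := by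
  have h : exp x ≤ 2 * cosh x := by
    rw [cosh_eq]
    linarith [exp_pos (-x)]
  calc exp (2 * x) = exp x ^ 2 := by rw [sq, ← exp_add, two_mul]
    _ ≤ (2 * cosh x) ^ 2 := pow_le_pow_left₀ (exp_pos x).le h 2
    _ = 4 * cosh x ^ 2 := by ring

lemma one_add_rpow_le_mul_exp {κ a s : ℝ} (hκ : 0 < κ) (ha : 0 < a) (hs : 0 ≤ s) :
    (1 + s) ^ κ ≤ (1 + κ / a) ^ κ * exp (a * s) := by
  have h : 1 + s ≤ (1 + κ / a) * exp (a * s / κ) :=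
    calc 1 + s ≤ 1 + s + (a * s / κ + κ / a) := by
          have : 0 ≤ a * s / κ + κ / a := by positivity
          linarith
      _ = (1 + κ / a) * (a * s / κ + 1) := by field_simp; ring
      _ ≤ (1 + κ / a) * exp (a * s / κ) := by gcongr; exact add_one_le_exp _
  calc (1 + s) ^ κ ≤ ((1 + κ / a) * exp (a * s / κ)) ^ κ := rpow_le_rpow (by linarith) h hκ.le
    _ = (1 + κ / a) ^ κ * exp (a * s) := by
        rw [mul_rpow (by positivity) (exp_pos _).le, ← exp_mul, div_mul_cancel₀ _ hκ.ne']

section weightIntegral_bounds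

variable {κ s : ℝ}

lemma le_weightIntegral_of_nonneg (hκ : 1 ≤ κ) (hs : 0 ≤ s) :
    exp (-1) / κ * 2 ^ (-κ) * cosh (π * s) ^ 2 * (1 + s) ^ (-κ) ≤ weightIntegral κ s := by
  have hκ0 : 0 < κ := by linarith
  have hdouble : 2 ^ (-κ) * (1 + s) ^ (-κ) ≤ (1 + 2 * s) ^ (-κ) := by
    rw [← mul_rpow (x := 2) (y := 1 + s) zero_le_two (by linarith)]
    exact rpow_le_rpow_of_nonpos (by linarith) (by linarith) (by linarith)
  have hcosh : cosh (π * s) ^ 2 ≤ exp (2 * π * s) := by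
    rw [mul_assoc]
    exact cosh_sq_le_exp_two_mul (by positivity)
  calc exp (-1) / κ * 2 ^ (-κ) * cosh (π * s) ^ 2 * (1 + s) ^ (-κ)
      = exp (-1) / κ * cosh (π * s) ^ 2 * (2 ^ (-κ) * (1 + s) ^ (-κ)) := by ring
    _ ≤ exp (-1) / κ * exp (2 * π * s) * (1 + 2 * s) ^ (-κ) := by gcongr
    _ = exp (2 * π * s) * (exp (-1) / κ * (1 + 2 * s) ^ (-κ)) := by ring
    _ ≤ exp (2 * π * s) * truncLaplace κ (2 * s) := by
        gcongr
        exact exp_neg_one_div_mul_le_truncLaplace hκ0 (by linarith)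
    _ ≤ weightIntegral κ s := by
        rw [weightIntegral_eq hκ]
        exact le_add_of_nonneg_right (mul_nonneg (exp_pos _).le (truncLaplace_nonneg _))

lemma weightIntegral_le_of_nonneg (hκ : 1 ≤ κ) (hs : 0 ≤ s) :
    weightIntegral κ s ≤ 4 * (exp π * Gamma κ + π ^ κ / κ * (1 + κ / (2 * π)) ^ κ) *
      cosh (π * s) ^ 2 * (1 + s) ^ (-κ) := by
  have hκ0 : 0 < κ := by linarith
  have hΓ : 0 ≤ Gamma κ := (Gamma_pos_of_pos hκ0).le
  have hpoly : 1 ≤ (1 + κ / (2 * π)) ^ κ * exp (2 * π * s) * (1 + s) ^ (-κ) := by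
    have h := mul_le_mul_of_nonneg_right (one_add_rpow_le_mul_exp hκ0 two_pi_pos hs)
      (rpow_nonneg (by linarith : (0:ℝ) ≤ 1 + s) (-κ))
    rwa [← rpow_add (by linarith), add_neg_cancel, rpow_zero] at h
  have hmain : exp (2 * π * s) * truncLaplace κ (2 * s) ≤
      exp π * Gamma κ * exp (2 * π * s) * (1 + s) ^ (-κ) := by
    calc exp (2 * π * s) * truncLaplace κ (2 * s)
        ≤ exp (2 * π * s) * (exp π * Gamma κ * (1 + 2 * s) ^ (-κ)) := by
          gcongr
          exact truncLaplace_le_one_add_rpow hκ0 (by linarith)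
      _ ≤ exp (2 * π * s) * (exp π * Gamma κ * (1 + s) ^ (-κ)) := by
          gcongr exp (2 * π * s) * (exp π * Gamma κ * ?_)
          exact rpow_le_rpow_of_nonpos (by linarith) (by linarith) (by linarith)
      _ = exp π * Gamma κ * exp (2 * π * s) * (1 + s) ^ (-κ) := by ring
  have hrest : exp (-(2 * π * s)) * truncLaplace κ (-(2 * s)) ≤ π ^ κ / κ := by
    calc exp (-(2 * π * s)) * truncLaplace κ (-(2 * s))
        ≤ exp (-(2 * π * s)) * (π ^ κ / κ * exp (π * (2 * s))) := by
          gcongr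
          exact truncLaplace_neg_le hκ0 (by linarith)
      _ = π ^ κ / κ := by
          rw [mul_left_comm, ← exp_add, show -(2 * π * s) + π * (2 * s) = 0 by ring, exp_zero,
            mul_one]
  calc weightIntegral κ s
      ≤ exp π * Gamma κ * exp (2 * π * s) * (1 + s) ^ (-κ) +
          π ^ κ / κ * ((1 + κ / (2 * π)) ^ κ * exp (2 * π * s) * (1 + s) ^ (-κ)) := by
        rw [weightIntegral_eq hκ]
        exact add_le_add hmain (hrest.trans (le_mul_of_one_le_right (by positivity) hpoly))
    _ = (exp π * Gamma κ + π ^ κ / κ * (1 + κ / (2 * π)) ^ κ) * exp (2 * (π * s)) *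
          (1 + s) ^ (-κ) := by ring_nf
    _ ≤ (exp π * Gamma κ + π ^ κ / κ * (1 + κ / (2 * π)) ^ κ) * (4 * cosh (π * s) ^ 2) *
          (1 + s) ^ (-κ) := by
        gcongr
        exact exp_two_mul_le_four_mul_cosh_sq _
    _ = _ := by ring

end weightIntegral_bounds

theorem stmt_10 (α : ℝ) (hα : 1 / 2 < α) :
    ∃ c C : ℝ, 0 < c ∧ 0 < C ∧ ∀ s : ℝ,
      c * Real.cosh (π * s) ^ 2 * (1 + |s|) ^ (-(2 * α)) ≤
          (∫ θ in (-π)..π, (π - |θ|) ^ (2 * α - 1) * Real.exp (2 * θ * s)) ∧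
      (∫ θ in (-π)..π, (π - |θ|) ^ (2 * α - 1) * Real.exp (2 * θ * s)) ≤
          C * Real.cosh (π * s) ^ 2 * (1 + |s|) ^ (-(2 * α)) := by
  have hκ : 1 ≤ 2 * α := by linarith
  have hκ0 : 0 < 2 * α := by linarith
  have hΓ := Gamma_pos_of_pos hκ0
  refine ⟨exp (-1) / (2 * α) * 2 ^ (-(2 * α)),
    4 * (exp π * Gamma (2 * α) + π ^ (2 * α) / (2 * α) * (1 + 2 * α / (2 * π)) ^ (2 * α)),
    by positivity, by positivity, fun s => ?_⟩
  have hcosh : cosh (π * |s|) = cosh (π * s) := by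
    rw [← cosh_abs (π * s), abs_mul, abs_of_pos pi_pos]
  have hlow := le_weightIntegral_of_nonneg hκ (abs_nonneg s)
  have hup := weightIntegral_le_of_nonneg hκ (abs_nonneg s)
  rw [weightIntegral_abs, hcosh] at hlow hup
  exact ⟨hlow, hup⟩
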